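/- arXiv:math/0409457 — 4 statements merged into one kernel-verified Lean document; each statement's English description precedes it below -/
import Mathlib

section
/- Let F be a C^2 symmetric function on the open positive cone Γ₊ ⊂ ℝⁿ, positively homogeneous of degree d₀ > 0, with all partial derivatives F_i > 0 on Γ₊. If there exists a constant c ≥ 1 such that for all κ ∈ Γ₊ and all ξ ∈ ℝⁿ one has F_{ij}(κ) ξ^i ξ^j ≤ c F(κ)^{-1} (F_i(κ) ξ^i)² − F_i(κ) κ_i^{-1} |ξ^i|², and additionally F_i κ_i ≤ F_j κ_j whenever κ_j ≤ κ_i, then the same inequality holds with constant c = 1, i.e. F_{ij} ξ^i ξ^j ≤ F^{-1}(F_i ξ^i)² − F_i κ_i^{-1} |ξ^i|² for all ξ ∈ ℝⁿ. -/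
/-! Write `g = ∇F(κ)`, `S = g·ξ` and `B(ξ) = D²F(κ)(ξ, ξ) + ∑ F_i κ_i⁻¹ (ξ^i)²`. Euler's
relations for `F` and for its gradient give `g·κ = d₀ F` and `D²F(κ) κ = (d₀ - 1) g`. The shifted
vector `η = ξ + t κ` with `t = -S / (d₀ F)` satisfies `g·η = 0`, so the hypothesis at `η` holds
with no `c`-term, while the Euler relations give `B(η) = B(ξ) - F⁻¹ S²`. Hence `B(ξ) ≤ F⁻¹ S²`. -/
noncomputable def pd {n : ℕ} (F : (Fin n → ℝ) → ℝ) (κ : Fin n → ℝ) (i : Fin n) : ℝ :=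
  fderiv ℝ F κ (Pi.single i 1)

noncomputable def pd2 {n : ℕ} (F : (Fin n → ℝ) → ℝ) (κ : Fin n → ℝ) (i j : Fin n) : ℝ :=
  fderiv ℝ (fun x => fderiv ℝ F x (Pi.single j 1)) κ (Pi.single i 1)

open Filter Topology Matrix

theorem isOpen_setOf_forall_pos {ι : Type*} [Finite ι] : IsOpen {x : ι → ℝ | ∀ i, 0 < x i} := by
  simpa only [Set.ofPred_forall] using
    isOpen_iInter_of_finite fun i => isOpen_lt continuous_const (continuous_apply i)

section Homogeneous

variable {E : Type*} [NormedAddCommGroup E] [NormedSpace ℝ E] {G : E → ℝ} {x : E} {d : ℝ}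

theorem fderiv_apply_self_of_homogeneous (hG : DifferentiableAt ℝ G x)
    (hhom : ∀ t : ℝ, 0 < t → G (t • x) = t ^ d * G x) : fderiv ℝ G x x = d * G x := by
  have hray : HasDerivAt (fun t : ℝ => G (t • x)) (fderiv ℝ G x x) 1 := by
    have hline : HasDerivAt (fun t : ℝ => t • x) x 1 := by
      simpa using (hasDerivAt_id (1 : ℝ)).smul_const x
    have hG' : HasFDerivAt G (fderiv ℝ G x) ((1 : ℝ) • x) := by simpa using hG.hasFDerivAt
    exact hG'.comp_hasDerivAt 1 hline
  have hpow : HasDerivAt (fun t : ℝ => t ^ d * G x) (d * G x) 1 := by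
    simpa using (Real.hasDerivAt_rpow_const (Or.inl one_ne_zero)).mul_const (G x)
  refine hray.unique (hpow.congr_of_eventuallyEq ?_)
  filter_upwards [Ioi_mem_nhds one_pos] with t ht using hhom t ht

theorem fderiv_smul_eq_of_homogeneous {t : ℝ} (ht : t ≠ 0) (hGx : DifferentiableAt ℝ G x)
    (hGtx : DifferentiableAt ℝ G (t • x)) (hhom : ∀ᶠ y in 𝓝 x, G (t • y) = t ^ d * G y) :
    fderiv ℝ G (t • x) = t ^ (d - 1) • fderiv ℝ G x := by
  have hcomp : HasFDerivAt (fun y => G (t • y))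
      ((fderiv ℝ G (t • x)).comp (t • ContinuousLinearMap.id ℝ E)) x :=
    hGtx.hasFDerivAt.comp x ((hasFDerivAt_id x).const_smul t)
  have hscaled : HasFDerivAt (fun y => t ^ d * G y) (t ^ d • fderiv ℝ G x) x :=
    hGx.hasFDerivAt.const_mul _
  have key : t • fderiv ℝ G (t • x) = t ^ d • fderiv ℝ G x := by
    have := (hcomp.congr_of_eventuallyEq (hhom.mono fun y h => h.symm)).unique hscaled
    rwa [ContinuousLinearMap.comp_smul, ContinuousLinearMap.comp_id] at this
  rw [Real.rpow_sub_one ht, div_eq_inv_mul, mul_smul, ← key, smul_smul, inv_mul_cancel₀ ht,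
    one_smul]

end Homogeneous

theorem sum_fderiv_single_mul_eq_of_homogeneous {ι : Type*} [Fintype ι] [DecidableEq ι]
    {G : (ι → ℝ) → ℝ} {x : ι → ℝ} {d : ℝ} (hG : DifferentiableAt ℝ G x)
    (hhom : ∀ t : ℝ, 0 < t → G (t • x) = t ^ d * G x) :
    ∑ i, fderiv ℝ G x (Pi.single i 1) * x i = d * G x := by
  calc ∑ i, fderiv ℝ G x (Pi.single i 1) * x i = fderiv ℝ G x (∑ i, x i • Pi.single i 1) := by
        simp [mul_comm]
    _ = d * G x := by rw [← pi_eq_sum_univ' x, fderiv_apply_self_of_homogeneous hG hhom]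

section PartialDerivatives

variable {n : ℕ} {F : (Fin n → ℝ) → ℝ} {κ : Fin n → ℝ}

theorem pd2_comm (hF : ContDiffAt ℝ 2 F κ) (i j : Fin n) : pd2 F κ i j = pd2 F κ j i := by
  have hdF : DifferentiableAt ℝ (fderiv ℝ F) κ :=
    (hF.fderiv_right (m := 1) (by norm_num)).differentiableAt one_ne_zero
  have hcurry : ∀ u w : Fin n → ℝ,
      fderiv ℝ (fun x => fderiv ℝ F x u) κ w = fderiv ℝ (fderiv ℝ F) κ w u := fun u w => by
    simp [fderiv_clm_apply hdF (differentiableAt_const u)]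
  rw [pd2, pd2, hcurry, hcurry, (hF.isSymmSndFDerivAt (by norm_num)).eq]

theorem differentiableAt_pd (hF : ContDiffAt ℝ 2 F κ) (j : Fin n) :
    DifferentiableAt ℝ (fun x => pd F x j) κ :=
  ((hF.fderiv_right (m := 1) (by norm_num)).clm_apply contDiffAt_const).differentiableAt
    one_ne_zero

theorem pd_smul_of_homogeneous {d : ℝ} (hF : DifferentiableOn ℝ F {κ | ∀ i, 0 < κ i})
    (hhom : ∀ κ : Fin n → ℝ, (∀ i, 0 < κ i) → ∀ t : ℝ, 0 < t → F (t • κ) = t ^ d * F κ)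
    (hκ : ∀ i, 0 < κ i) {t : ℝ} (ht : 0 < t) (j : Fin n) :
    pd F (t • κ) j = t ^ (d - 1) * pd F κ j := by
  have hcone : {κ : Fin n → ℝ | ∀ i, 0 < κ i} ∈ 𝓝 κ := isOpen_setOf_forall_pos.mem_nhds hκ
  have htκ : ∀ i, 0 < (t • κ) i := fun i => mul_pos ht (hκ i)
  rw [pd, fderiv_smul_eq_of_homogeneous ht.ne' (hF.differentiableAt hcone)
    (hF.differentiableAt (isOpen_setOf_forall_pos.mem_nhds htκ))
    (mem_of_superset hcone fun y hy => hhom y hy t ht)]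
  rfl

end PartialDerivatives

theorem sum_sum_mul_mul_eq_dotProduct_mulVec {ι R : Type*} [Fintype ι] [CommSemiring R]
    (H : Matrix ι ι R) (ξ : ι → R) : ∑ i, ∑ j, H i j * ξ i * ξ j = ξ ⬝ᵥ H *ᵥ ξ := by
  simp only [dotProduct, mulVec, Finset.mul_sum]
  exact Finset.sum_congr rfl fun i _ => Finset.sum_congr rfl fun j _ => by ring

theorem dotProduct_mulVec_le_of_le_on_ker {ι : Type*} [Fintype ι] {H : Matrix ι ι ℝ}
    (hH : H.IsSymm) {g κ : ι → ℝ} {d f : ℝ} (hκ : ∀ i, κ i ≠ 0) (hd : d ≠ 0) (hf : f ≠ 0)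
    (hgκ : g ⬝ᵥ κ = d * f) (hHκ : κ ᵥ* H = (d - 1) • g)
    (hker : ∀ η, g ⬝ᵥ η = 0 → η ⬝ᵥ H *ᵥ η ≤ -∑ i, g i * (κ i)⁻¹ * η i ^ 2) (ξ : ι → ℝ) :
    ξ ⬝ᵥ H *ᵥ ξ ≤ f⁻¹ * (g ⬝ᵥ ξ) ^ 2 - ∑ i, g i * (κ i)⁻¹ * ξ i ^ 2 := by
  set S := g ⬝ᵥ ξ
  set t := -S / (d * f)
  have htS : t * (d * f) = -S := div_mul_cancel₀ _ (mul_ne_zero hd hf)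
  have horth : g ⬝ᵥ (ξ + t • κ) = 0 := by
    rw [dotProduct_add, dotProduct_smul, hgκ, smul_eq_mul, htS, add_neg_cancel]
  have hquad : (ξ + t • κ) ⬝ᵥ H *ᵥ (ξ + t • κ) =
      ξ ⬝ᵥ H *ᵥ ξ + 2 * t * ((d - 1) * S) + t ^ 2 * ((d - 1) * (d * f)) := by
    have hHκ' : H *ᵥ κ = (d - 1) • g := by rw [← vecMul_transpose, hH.eq, hHκ]
    simp only [mulVec_add, mulVec_smul, dotProduct_add, add_dotProduct, dotProduct_smul,
      smul_dotProduct, dotProduct_mulVec κ, hHκ, hHκ', smul_eq_mul, dotProduct_comm ξ g,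
      dotProduct_comm κ g, hgκ]
    ring
  have hweight : ∑ i, g i * (κ i)⁻¹ * (ξ + t • κ) i ^ 2 =
      ∑ i, g i * (κ i)⁻¹ * ξ i ^ 2 + 2 * t * S + t ^ 2 * (d * f) := by
    rw [← hgκ]
    simp only [S, dotProduct, Finset.mul_sum, ← Finset.sum_add_distrib]
    refine Finset.sum_congr rfl fun i _ => ?_
    simp only [Pi.add_apply, Pi.smul_apply, smul_eq_mul]
    field_simp [hκ i]
    ring
  have hshift := hker _ horth
  rw [hquad, hweight] at hshift
  have hsq : f⁻¹ * S ^ 2 = -(2 * t * d * S) - t ^ 2 * d ^ 2 * f := by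
    rw [show S = -(t * (d * f)) by linarith]
    field_simp
    ring
  rw [hsq]
  linarith

theorem stmt0_general (n : ℕ) (F : (Fin n → ℝ) → ℝ) (d₀ : ℝ) (hd₀ : 0 < d₀)
    (hC2 : ContDiffOn ℝ 2 F {κ : Fin n → ℝ | ∀ i, 0 < κ i})
    (hhom : ∀ (κ : Fin n → ℝ), (∀ i, 0 < κ i) → ∀ t : ℝ, 0 < t → F (t • κ) = t ^ d₀ * F κ)
    (hFi : ∀ (κ : Fin n → ℝ), (∀ i, 0 < κ i) → ∀ i, 0 < pd F κ i)
    (c : ℝ)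
    (hineq : ∀ (κ : Fin n → ℝ), (∀ i, 0 < κ i) → ∀ ξ : Fin n → ℝ,
      ∑ i, ∑ j, pd2 F κ i j * ξ i * ξ j ≤
        c * (F κ)⁻¹ * (∑ i, pd F κ i * ξ i) ^ 2 - ∑ i, pd F κ i * (κ i)⁻¹ * (ξ i) ^ 2) :
    ∀ (κ : Fin n → ℝ), (∀ i, 0 < κ i) → ∀ ξ : Fin n → ℝ,
      ∑ i, ∑ j, pd2 F κ i j * ξ i * ξ j ≤
        (F κ)⁻¹ * (∑ i, pd F κ i * ξ i) ^ 2 - ∑ i, pd F κ i * (κ i)⁻¹ * (ξ i) ^ 2 := by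
  intro κ hκ ξ
  rcases isEmpty_or_nonempty (Fin n) with _ | _
  · simp
  have hF2 : ContDiffAt ℝ 2 F κ := hC2.contDiffAt (isOpen_setOf_forall_pos.mem_nhds hκ)
  have hF1 : DifferentiableOn ℝ F {κ : Fin n → ℝ | ∀ i, 0 < κ i} :=
    hC2.differentiableOn (by norm_num)
  have hEuler : pd F κ ⬝ᵥ κ = d₀ * F κ :=
    sum_fderiv_single_mul_eq_of_homogeneous (hF2.differentiableAt (by norm_num)) (hhom κ hκ)
  have hEuler₂ : κ ᵥ* Matrix.of (pd2 F κ) = (d₀ - 1) • pd F κ := by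
    ext j
    rw [vecMul, dotProduct_comm]
    exact sum_fderiv_single_mul_eq_of_homogeneous (differentiableAt_pd hF2 j)
      fun t ht => pd_smul_of_homogeneous hF1 hhom hκ ht j
  have hFκ : F κ ≠ 0 := by
    have hpos : 0 < pd F κ ⬝ᵥ κ :=
      Finset.sum_pos (fun i _ => mul_pos (hFi κ hκ i) (hκ i)) Finset.univ_nonempty
    exact right_ne_zero_of_mul (hEuler ▸ hpos.ne')
  have hQ (η : Fin n → ℝ) :
      ∑ i, ∑ j, pd2 F κ i j * η i * η j = η ⬝ᵥ Matrix.of (pd2 F κ) *ᵥ η :=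
    sum_sum_mul_mul_eq_dotProduct_mulVec _ η
  rw [hQ]
  refine dotProduct_mulVec_le_of_le_on_ker (IsSymm.ext fun i j => pd2_comm hF2 j i)
    (fun i => (hκ i).ne') hd₀.ne' hFκ hEuler hEuler₂ (fun η hη => ?_) ξ
  have h := hineq κ hκ η
  rwa [hQ, show ∑ i, pd F κ i * η i = 0 from hη, zero_pow two_ne_zero, mul_zero, zero_sub] at h

/-- if the concavity-type inequality holds with some constant c ≥ 1,
together with the monotonicity condition F_i κ_i ≤ F_j κ_j for κ_j ≤ κ_i, then it
holds with constant c = 1. -/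
theorem stmt0 (n : ℕ) (F : (Fin n → ℝ) → ℝ) (d₀ : ℝ) (hd₀ : 0 < d₀)
    (hsym : ∀ (κ : Fin n → ℝ), (∀ i, 0 < κ i) → ∀ g : Equiv.Perm (Fin n), F (κ ∘ g) = F κ)
    (hC2 : ContDiffOn ℝ 2 F {κ : Fin n → ℝ | ∀ i, 0 < κ i})
    (hhom : ∀ (κ : Fin n → ℝ), (∀ i, 0 < κ i) → ∀ t : ℝ, 0 < t → F (t • κ) = t ^ d₀ * F κ)
    (hFi : ∀ (κ : Fin n → ℝ), (∀ i, 0 < κ i) → ∀ i, 0 < pd F κ i)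
    (c : ℝ) (hc : 1 ≤ c)
    (hineq : ∀ (κ : Fin n → ℝ), (∀ i, 0 < κ i) → ∀ ξ : Fin n → ℝ,
      ∑ i, ∑ j, pd2 F κ i j * ξ i * ξ j ≤
        c * (F κ)⁻¹ * (∑ i, pd F κ i * ξ i) ^ 2 - ∑ i, pd F κ i * (κ i)⁻¹ * (ξ i) ^ 2)
    (hmono : ∀ (κ : Fin n → ℝ), (∀ i, 0 < κ i) → ∀ i j, κ j ≤ κ i →
      pd F κ i * κ i ≤ pd F κ j * κ j) :
    ∀ (κ : Fin n → ℝ), (∀ i, 0 < κ i) → ∀ ξ : Fin n → ℝ,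
      ∑ i, ∑ j, pd2 F κ i j * ξ i * ξ j ≤
        (F κ)⁻¹ * (∑ i, pd F κ i * ξ i) ^ 2 - ∑ i, pd F κ i * (κ i)⁻¹ * (ξ i) ^ 2 :=
  stmt0_general n F d₀ hd₀ hC2 hhom hFi c hineq
end

section
/- Let n = 2 and let F be a C² symmetric positive function on Γ₊ ⊂ ℝ², positively homogeneous of degree 1, with F_i > 0, satisfying F₁κ¹ ≥ F₂κ² whenever κ¹ ≤ κ², and suppose there is ε₀ > 0 with ε₀ F(κ)(κ¹+κ²) ≤ F₁(κ)(κ¹)² + F₂(κ)(κ²)² for all κ ∈ Γ₊. Then there exists ε₁ > 0 such that F_i(κ) κ_i ≥ ε₁ F(κ) for all κ ∈ Γ₊ and i = 1, 2. -/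
/-- for n = 2, the (K*) condition implies the uniform lower bound
F_i κ_i ≥ ε₁ F on the positive cone. -/
theorem stmt7 (F : (Fin 2 → ℝ) → ℝ)
    (hsym : ∀ (κ : Fin 2 → ℝ), (∀ i, 0 < κ i) → ∀ g : Equiv.Perm (Fin 2), F (κ ∘ g) = F κ)
    (hC2 : ContDiffOn ℝ 2 F {κ : Fin 2 → ℝ | ∀ i, 0 < κ i})
    (hhom : ∀ (κ : Fin 2 → ℝ), (∀ i, 0 < κ i) → ∀ t : ℝ, 0 < t → F (t • κ) = t * F κ)
    (hFpos : ∀ (κ : Fin 2 → ℝ), (∀ i, 0 < κ i) → 0 < F κ)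
    (hFi : ∀ (κ : Fin 2 → ℝ), (∀ i, 0 < κ i) → ∀ i, 0 < pd F κ i)
    (hmono : ∀ (κ : Fin 2 → ℝ), (∀ i, 0 < κ i) → κ 0 ≤ κ 1 →
      pd F κ 1 * κ 1 ≤ pd F κ 0 * κ 0)
    (ε₀ : ℝ) (hε₀ : 0 < ε₀)
    (hKstar : ∀ (κ : Fin 2 → ℝ), (∀ i, 0 < κ i) →
      ε₀ * F κ * (κ 0 + κ 1) ≤ pd F κ 0 * (κ 0) ^ 2 + pd F κ 1 * (κ 1) ^ 2) :
    ∃ ε₁ : ℝ, 0 < ε₁ ∧ ∀ (κ : Fin 2 → ℝ), (∀ i, 0 < κ i) → ∀ i,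
      ε₁ * F κ ≤ pd F κ i * κ i := by
  classical
  set s : Set (Fin 2 → ℝ) := {κ : Fin 2 → ℝ | ∀ i, 0 < κ i} with hs_def
  have hs : IsOpen s := by
    have h : s = ⋂ i : Fin 2, (fun κ : Fin 2 → ℝ => κ i) ⁻¹' Set.Ioi 0 := by
      ext κ; simp [hs_def, Set.mem_iInter]
    rw [h]
    exact isOpen_iInter_of_finite fun i => (continuous_apply i).isOpen_preimage _ isOpen_Ioi
  have hdiff : ∀ κ ∈ s, DifferentiableAt ℝ F κ := fun κ hκ =>
    (hC2.contDiffAt (hs.mem_nhds hκ)).differentiableAt (by norm_num)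
  -- Euler's identity
  have euler : ∀ κ ∈ s, pd F κ 0 * κ 0 + pd F κ 1 * κ 1 = F κ := by
    intro κ hκ
    have h1 : HasFDerivAt F (fderiv ℝ F κ) κ := (hdiff κ hκ).hasFDerivAt
    have hc : HasDerivAt (fun t : ℝ => t • κ) κ 1 := by
      simpa using (hasDerivAt_id (1:ℝ)).smul_const κ
    have h1' : HasFDerivAt F (fderiv ℝ F κ) ((fun t : ℝ => t • κ) 1) := by simpa using h1
    have h2 : HasDerivAt (fun t : ℝ => F (t • κ)) (fderiv ℝ F κ κ) 1 :=
      h1'.comp_hasDerivAt 1 hc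
    have heq : (fun t : ℝ => F (t • κ)) =ᶠ[nhds (1:ℝ)] fun t => t * F κ := by
      filter_upwards [Ioi_mem_nhds (zero_lt_one)] with t ht
      exact hhom κ hκ t ht
    have h3 : HasDerivAt (fun t : ℝ => t * F κ) (fderiv ℝ F κ κ) 1 :=
      h2.congr_of_eventuallyEq heq.symm
    have h4 : fderiv ℝ F κ κ = F κ := h3.unique (hasDerivAt_mul_const (F κ))
    have hκdecomp : κ = κ 0 • (Pi.single 0 1 : Fin 2 → ℝ) + κ 1 • (Pi.single 1 1 : Fin 2 → ℝ) := by
      funext j; fin_cases j <;> simp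
    have h5 : fderiv ℝ F κ (κ 0 • (Pi.single 0 1 : Fin 2 → ℝ) + κ 1 • (Pi.single 1 1 : Fin 2 → ℝ))
        = κ 0 * pd F κ 0 + κ 1 * pd F κ 1 := by
      rw [map_add, map_smul, map_smul]; simp [pd, smul_eq_mul]
    rw [← hκdecomp] at h5
    rw [h4] at h5
    linarith
  -- scaling invariance of the derivative
  have hscale : ∀ κ ∈ s, ∀ t : ℝ, 0 < t → ∀ i, pd F (t • κ) i = pd F κ i := by
    intro κ hκ t ht i
    have hmem : t • κ ∈ s := by
      intro j
      have := mul_pos ht (hκ j)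
      simpa [Pi.smul_apply, smul_eq_mul] using this
    have hL : HasFDerivAt (fun x : Fin 2 → ℝ => t • x)
        (t • ContinuousLinearMap.id ℝ (Fin 2 → ℝ)) κ := by
      simpa using ((t • ContinuousLinearMap.id ℝ (Fin 2 → ℝ)).hasFDerivAt (x := κ))
    have h2 : HasFDerivAt (fun x => F (t • x))
        ((fderiv ℝ F (t • κ)).comp (t • ContinuousLinearMap.id ℝ (Fin 2 → ℝ))) κ :=
      HasFDerivAt.comp κ (hdiff _ hmem).hasFDerivAt hL
    have heq : (fun x => F (t • x)) =ᶠ[nhds κ] fun x => t * F x := by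
      filter_upwards [hs.mem_nhds hκ] with x hx
      exact hhom x hx t ht
    have h3 : HasFDerivAt (fun x => t * F x)
        ((fderiv ℝ F (t • κ)).comp (t • ContinuousLinearMap.id ℝ (Fin 2 → ℝ))) κ :=
      h2.congr_of_eventuallyEq heq.symm
    have h4 : HasFDerivAt (fun x => t * F x) (t • fderiv ℝ F κ) κ :=
      (hdiff κ hκ).hasFDerivAt.const_mul t
    have h5 := h3.unique h4
    have h6 := congrArg (fun L : (Fin 2 → ℝ) →L[ℝ] ℝ => L (Pi.single i 1)) h5
    simp only [ContinuousLinearMap.comp_apply, ContinuousLinearMap.smul_apply,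
      ContinuousLinearMap.coe_smul', Pi.smul_apply, ContinuousLinearMap.coe_id', id_eq,
      map_smul, smul_eq_mul] at h6
    exact mul_left_cancel₀ (ne_of_gt ht) (by simpa [pd] using h6)
  -- symmetry of the derivative
  have hsymd : ∀ κ ∈ s, ∀ i, pd F κ i = pd F (κ ∘ Equiv.swap 0 1) (Equiv.swap 0 1 i) := by
    intro κ hκ i
    set σ : Equiv.Perm (Fin 2) := Equiv.swap 0 1 with hσ
    set P : (Fin 2 → ℝ) →L[ℝ] (Fin 2 → ℝ) :=
      ContinuousLinearMap.pi (fun j => ContinuousLinearMap.proj (σ j)) with hP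
    have hPapp : ∀ (x : Fin 2 → ℝ), P x = x ∘ σ := by
      intro x; funext j; simp [hP]
    have hmem : κ ∘ σ ∈ s := fun j => hκ (σ j)
    have h1 : HasFDerivAt F (fderiv ℝ F (κ ∘ σ)) (P κ) := by
      rw [hPapp]; exact (hdiff _ hmem).hasFDerivAt
    have h2 : HasFDerivAt (fun x => F (P x)) ((fderiv ℝ F (κ ∘ σ)).comp P) κ :=
      HasFDerivAt.comp κ h1 P.hasFDerivAt
    have heq : (fun x => F (P x)) =ᶠ[nhds κ] F := by
      filter_upwards [hs.mem_nhds hκ] with x hx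
      rw [hPapp]; exact hsym x hx σ
    have h3 : HasFDerivAt F ((fderiv ℝ F (κ ∘ σ)).comp P) κ :=
      h2.congr_of_eventuallyEq heq.symm
    have h5 := h3.unique (hdiff κ hκ).hasFDerivAt
    have h6 := congrArg (fun L : (Fin 2 → ℝ) →L[ℝ] ℝ => L (Pi.single i 1)) h5
    have hPs : P (Pi.single i 1) = Pi.single (σ i) 1 := by
      rw [hPapp]; funext j
      simp only [Function.comp_apply, Pi.single_apply]
      have : σ j = i ↔ j = σ i := by
        constructor
        · intro h; rw [← h]; simp [hσ, Equiv.swap_apply_self]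
        · intro h; rw [h]; simp [hσ, Equiv.swap_apply_self]
      simp [this]
    simp only [ContinuousLinearMap.comp_apply, hPs] at h6
    simpa [pd] using h6.symm
  -- continuity of the derivative
  have hcont : ContinuousOn (fun κ => pd F κ 1) s := by
    have h1 : ContinuousOn (fderiv ℝ F) s :=
      hC2.continuousOn_fderiv_of_isOpen hs (by norm_num)
    simpa [pd] using h1.clm_apply (continuousOn_const (c := (Pi.single 1 1 : Fin 2 → ℝ)))
  -- compact slice
  set δ : ℝ := min (ε₀ / 2) 1 with hδdef
  have hδpos : 0 < δ := lt_min (by linarith) one_pos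
  have hδle : δ ≤ ε₀ / 2 := min_le_left _ _
  have hδ1 : δ ≤ 1 := min_le_right _ _
  set K : Set (Fin 2 → ℝ) :=
    Set.pi Set.univ (fun i => if i = 0 then Set.Icc δ 1 else Set.Icc 1 1) with hK_def
  have hKcomp : IsCompact K := isCompact_univ_pi (fun i => by split <;> exact isCompact_Icc)
  have hKne : K.Nonempty := by
    refine ⟨fun _ => 1, ?_⟩
    intro i _
    fin_cases i <;> simp [hδ1]
  have hKs : K ⊆ s := by
    intro κ hκ i
    have h0 := hκ 0 (Set.mem_univ _)
    have h1 := hκ 1 (Set.mem_univ _)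
    simp only [hK_def, if_pos rfl] at h0
    simp only [hK_def] at h1
    norm_num at h0 h1
    fin_cases i
    · exact lt_of_lt_of_le hδpos h0.1
    · simp [h1]
  obtain ⟨κm, hκmK, hκmmin'⟩ := hKcomp.exists_isMinOn hKne
    (((hcont.mono hKs).div ((hC2.continuousOn).mono hKs))
      (fun x hx => (hFpos x (hKs hx)).ne'))
  have hκmmin : ∀ x ∈ K, pd F κm 1 / F κm ≤ pd F x 1 / F x := fun x hx => hκmmin' hx
  set m : ℝ := pd F κm 1 / F κm with hm_def
  have hm : 0 < m := div_pos (hFi κm (hKs hκmK) 1) (hFpos κm (hKs hκmK))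
  set ε₁ : ℝ := min (min (1/2) (ε₀/2)) m with hε₁_def
  have hε₁pos : 0 < ε₁ := lt_min (lt_min (by norm_num) (by linarith)) hm
  -- key claim in the ordered case
  have key : ∀ κ ∈ s, κ 0 ≤ κ 1 → ∀ i, ε₁ * F κ ≤ pd F κ i * κ i := by
    intro κ hκ hle i
    have h0 := hκ 0
    have h1 := hκ 1
    have ha := hFi κ hκ 0
    have hb := hFi κ hκ 1
    have hEuler := euler κ hκ
    have hmon := hmono κ hκ hle
    have hFp := hFpos κ hκ
    fin_cases i
    · -- i = 0
      show ε₁ * F κ ≤ pd F κ 0 * κ 0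
      have hε : ε₁ ≤ 1/2 := le_trans (min_le_left _ _) (min_le_left _ _)
      have := mul_le_mul_of_nonneg_right hε hFp.le
      linarith
    · -- i = 1
      show ε₁ * F κ ≤ pd F κ 1 * κ 1
      rcases le_or_gt (κ 0) (δ * κ 1) with hcase | hcase
      · have hK := hKstar κ hκ
        have hεle : ε₁ ≤ ε₀ / 2 := le_trans (min_le_left _ _) (min_le_right _ _)
        have hFs0 : F κ * κ 0 ≤ F κ * (δ * κ 1) :=
          mul_le_mul_of_nonneg_left hcase hFp.le
        have hδF : δ * (F κ * κ 1) ≤ (ε₀/2) * (F κ * κ 1) :=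
          mul_le_mul_of_nonneg_right hδle (mul_nonneg hFp.le h1.le)
        have step1 : (ε₀/2) * (F κ * κ 1) ≤ pd F κ 1 * κ 1 * κ 1 := by
          nlinarith [mul_pos hb h0, mul_pos (mul_pos hb h1) h0, mul_pos hFp h0,
            mul_pos hε₀ (mul_pos hFp h0)]
        nlinarith [step1, h1, mul_pos hFp h1,
          mul_le_mul_of_nonneg_right (mul_le_mul_of_nonneg_right hεle hFp.le) h1.le]
      · -- scale down to the compact slice
        have htpos : (0:ℝ) < (κ 1)⁻¹ := inv_pos.mpr h1
        have hmemκ' : (κ 1)⁻¹ • κ ∈ s := by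
          intro j
          have := mul_pos htpos (hκ j)
          simpa [Pi.smul_apply, smul_eq_mul] using this
        have hκ'K : (κ 1)⁻¹ • κ ∈ K := by
          intro j _
          have hmem0 : δ ≤ (κ 1)⁻¹ * κ 0 := by
            rw [← div_eq_inv_mul, le_div_iff₀ h1]; linarith
          have hmem1 : (κ 1)⁻¹ * κ 0 ≤ 1 := by
            rw [← div_eq_inv_mul, div_le_one h1]; linarith
          fin_cases j
          · simpa [hK_def, Pi.smul_apply, smul_eq_mul] using ⟨hmem0, hmem1⟩
          · simp [hK_def, Pi.smul_apply, smul_eq_mul, inv_mul_cancel₀ h1.ne']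
        have hmle := hκmmin _ hκ'K
        have hpdeq : pd F ((κ 1)⁻¹ • κ) 1 = pd F κ 1 := hscale κ hκ _ htpos 1
        have hFval : F ((κ 1)⁻¹ • κ) = (κ 1)⁻¹ * F κ := hhom κ hκ _ htpos
        rw [hpdeq, hFval] at hmle
        have hrw : pd F κ 1 / ((κ 1)⁻¹ * F κ) = pd F κ 1 * κ 1 / F κ := by
          field_simp
        rw [hrw] at hmle
        have h' : m * F κ ≤ pd F κ 1 * κ 1 := (le_div_iff₀ hFp).mp hmle
        have hεm : ε₁ ≤ m := min_le_right _ _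
        have := mul_le_mul_of_nonneg_right hεm hFp.le
        linarith
  refine ⟨ε₁, hε₁pos, ?_⟩
  intro κ hκ i
  rcases le_or_gt (κ 0) (κ 1) with h | h
  · exact key κ hκ h i
  · have hκσ : κ ∘ (Equiv.swap 0 1 : Equiv.Perm (Fin 2)) ∈ s := fun j => hκ _
    have h01 : (κ ∘ (Equiv.swap 0 1 : Equiv.Perm (Fin 2))) 0 ≤
        (κ ∘ (Equiv.swap 0 1 : Equiv.Perm (Fin 2))) 1 := by
      simp only [Function.comp_apply, Equiv.swap_apply_left, Equiv.swap_apply_right]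
      exact h.le
    have hk := key _ hκσ h01 (Equiv.swap 0 1 i)
    have hFσ : F (κ ∘ (Equiv.swap 0 1 : Equiv.Perm (Fin 2))) = F κ := hsym κ hκ _
    rw [hFσ] at hk
    rw [hsymd κ hκ i]
    simpa [Equiv.swap_apply_self] using hk
end

section
/- Let N = ℝ × S₀ carry a Lorentzian metric of the form ds² = e^{2ψ}(−(dx⁰)² + σ_{ij}dx^i dx^j), let Ω̄ ⊂ N be compact, and suppose every level hypersurface {x⁰ = const} intersecting Ω̄ is strictly convex (its second fundamental form with respect to the past directed normal is positive definite). Then there exists λ > 0 such that χ = e^{λ x⁰} is strictly convex in Ω̄, i.e. its Hessian satisfies χ_{αβ} ≥ c ḡ_{αβ} for some c > 0, where ḡ is the Lorentzian metric. -/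
/-!
The Hessian of `χ = e^{λ t}` is `e^{λ t} λ (λ dt ⊗ dt + t_{αβ})`. Strict convexity of the slices
says that `t_{αβ}` is positive definite on `{η⁰ = 0}`, the kernel of `dt`; by a uniform version of
Finsler's lemma, on the compact set `λ (η⁰)² + t_{αβ} η^α η^β ≥ δ ‖η‖²` for some `λ, δ > 0`. Since
`ḡ(η, η) ≤ C ‖η‖²` there as well, and `e^{λ t - 2ψ}` is bounded below, a small `c > 0` works.
-/

open Set Metric Function

def IsSqHomogeneous {E : Type*} [AddCommGroup E] [Module ℝ E] (F : E → ℝ) : Prop :=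
  ∀ (c : ℝ) (x : E), F (c • x) = c ^ 2 * F x

namespace IsSqHomogeneous

variable {E : Type*} [NormedAddCommGroup E] [NormedSpace ℝ E] {F : E → ℝ}

theorem map_zero (hF : IsSqHomogeneous F) : F 0 = 0 := by
  simpa using hF 0 0

theorem eq_norm_sq_mul {x : E} (hF : IsSqHomogeneous F) (hx : x ≠ 0) :
    F x = ‖x‖ ^ 2 * F (‖x‖⁻¹ • x) := by
  rw [← hF, smul_smul, mul_inv_cancel₀ (norm_ne_zero_iff.mpr hx), one_smul]

theorem mul_norm_sq_le {c : ℝ} (hF : IsSqHomogeneous F) (h : ∀ y : E, ‖y‖ = 1 → c ≤ F y)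
    (x : E) : c * ‖x‖ ^ 2 ≤ F x := by
  rcases eq_or_ne x 0 with rfl | hx
  · simp [hF.map_zero]
  · rw [hF.eq_norm_sq_mul hx, mul_comm]
    exact mul_le_mul_of_nonneg_left (h _ (norm_smul_inv_norm (𝕜 := ℝ) hx)) (sq_nonneg _)

theorem le_mul_norm_sq {C : ℝ} (hF : IsSqHomogeneous F) (h : ∀ y : E, ‖y‖ = 1 → F y ≤ C)
    (x : E) : F x ≤ C * ‖x‖ ^ 2 := by
  have hneg : IsSqHomogeneous (-F) := fun c x => by simp [hF c x]
  simpa using hneg.mul_norm_sq_le (c := -C) (fun y hy => neg_le_neg (h y hy)) x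

theorem pos (hF : IsSqHomogeneous F) (h : ∀ y : E, ‖y‖ = 1 → 0 < F y) {x : E} (hx : x ≠ 0) :
    0 < F x := by
  rw [hF.eq_norm_sq_mul hx]
  exact mul_pos (by positivity) (h _ (norm_smul_inv_norm (𝕜 := ℝ) hx))

end IsSqHomogeneous

theorem isCompact_univ_prod_sphere {X E : Type*} [TopologicalSpace X] [CompactSpace X]
    [NormedAddCommGroup E] [ProperSpace E] :
    IsCompact (univ ×ˢ sphere (0 : E) 1 : Set (X × E)) :=
  isCompact_univ.prod (isCompact_sphere 0 1)

section Compact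

variable {X E : Type*} [TopologicalSpace X] [CompactSpace X]
  [NormedAddCommGroup E] [NormedSpace ℝ E] [ProperSpace E] {F : X → E → ℝ}

theorem exists_pos_mul_norm_sq_le (hFc : Continuous (uncurry F))
    (hF : ∀ p, IsSqHomogeneous (F p)) (hpos : ∀ p x, x ≠ 0 → 0 < F p x) :
    ∃ δ > 0, ∀ p x, δ * ‖x‖ ^ 2 ≤ F p x := by
  obtain ⟨δ, hδ, hδF⟩ := isCompact_univ_prod_sphere.exists_forall_le' hFc.continuousOn
    fun q hq => hpos q.1 q.2 (ne_zero_of_mem_unit_sphere ⟨q.2, hq.2⟩)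
  exact ⟨δ, hδ, fun p => (hF p).mul_norm_sq_le fun y hy =>
    hδF (p, y) ⟨mem_univ p, mem_sphere_zero_iff_norm.mpr hy⟩⟩

theorem exists_le_mul_norm_sq (hFc : Continuous (uncurry F))
    (hF : ∀ p, IsSqHomogeneous (F p)) : ∃ C, ∀ p x, F p x ≤ C * ‖x‖ ^ 2 := by
  obtain ⟨C, hC⟩ := (isCompact_univ_prod_sphere.image_of_continuousOn
    hFc.continuousOn).bddAbove
  exact ⟨C, fun p => (hF p).le_mul_norm_sq fun y hy =>
    hC ⟨(p, y), ⟨mem_univ p, mem_sphere_zero_iff_norm.mpr hy⟩, rfl⟩⟩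

/-- Uniform Finsler lemma. -/
theorem exists_coercive_mul_sq_add (F : X → E → ℝ) (ℓ : E →L[ℝ] ℝ)
    (hFc : Continuous (uncurry F)) (hF : ∀ p, IsSqHomogeneous (F p))
    (hpos : ∀ p x, x ≠ 0 → ℓ x = 0 → 0 < F p x) :
    ∃ lam > 0, ∃ δ > 0, ∀ p x, δ * ‖x‖ ^ 2 ≤ lam * ℓ x ^ 2 + F p x := by
  let G : ℕ → X → E → ℝ := fun k p x => (k + 1) * ℓ x ^ 2 + F p x
  have hGc (k : ℕ) : Continuous (uncurry (G k)) :=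
    (continuous_const.mul ((ℓ.continuous.comp continuous_snd).pow 2)).add hFc
  have hG (k : ℕ) (p : X) : IsSqHomogeneous (G k p) := fun c x => by
    simp only [G, map_smul, smul_eq_mul, hF p c x]
    ring
  -- The open sets `{G k > 0}` increase with `k` and cover the compact set `X × sphere 0 1`.
  obtain ⟨k, hk⟩ := isCompact_univ_prod_sphere.elim_directed_cover
    (fun k => {q : X × E | 0 < uncurry (G k) q}) (fun k => isOpen_lt continuous_const (hGc k))
    (fun q hq => by
      have hq0 : q.2 ≠ 0 := ne_zero_of_mem_unit_sphere ⟨q.2, hq.2⟩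
      refine mem_iUnion.mpr ?_
      rcases eq_or_ne (ℓ q.2) 0 with hℓ | hℓ
      · exact ⟨0, show 0 < G 0 q.1 q.2 by simpa [G, hℓ] using hpos q.1 q.2 hq0 hℓ⟩
      · obtain ⟨k, hk⟩ := exists_nat_gt (-F q.1 q.2 / ℓ q.2 ^ 2)
        rw [div_lt_iff₀ (by positivity)] at hk
        exact ⟨k, show 0 < G k q.1 q.2 by simp only [G]; nlinarith [sq_nonneg (ℓ q.2)]⟩)
    (Monotone.directed_le fun k k' hkk' q (hq : 0 < G k q.1 q.2) =>
      show 0 < G k' q.1 q.2 from hq.trans_le (by simp only [G]; gcongr))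
  obtain ⟨δ, hδ, hδG⟩ := exists_pos_mul_norm_sq_le (hGc k) (hG k) fun p x hx =>
    (hG k p).pos (fun y hy => hk (show (p, y) ∈ _ from
      ⟨mem_univ p, mem_sphere_zero_iff_norm.mpr hy⟩)) hx
  exact ⟨k + 1, by positivity, δ, hδ, hδG⟩

end Compact

section Coordinates

variable {ι : Type*} [Fintype ι]

theorem isSqHomogeneous_sum_sum_mul (A : Matrix ι ι ℝ) :
    IsSqHomogeneous fun x : ι → ℝ => ∑ i, ∑ j, A i j * x i * x j := fun c x => by
  simp only [Pi.smul_apply, smul_eq_mul, Finset.mul_sum]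
  exact Finset.sum_congr rfl fun i _ => Finset.sum_congr rfl fun j _ => by ring

theorem continuous_sum_sum_mul {X : Type*} [TopologicalSpace X] {A : X → Matrix ι ι ℝ}
    (hA : Continuous A) :
    Continuous fun q : X × (ι → ℝ) => ∑ i, ∑ j, A q.1 i j * q.2 i * q.2 j := by
  have := fun i j => hA.matrix_elem i j
  fun_prop

end Coordinates

section Lorentzian

variable {n : ℕ} {X : Type*} [TopologicalSpace X] [CompactSpace X]

theorem sum_sum_mul_eq_of_apply_zero (A : Matrix (Fin (n + 1)) (Fin (n + 1)) ℝ)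
    {η : Fin (n + 1) → ℝ} (hη : η 0 = 0) :
    ∑ α, ∑ β, A α β * η α * η β =
      ∑ i : Fin n, ∑ j : Fin n, A i.succ j.succ * η i.succ * η j.succ := by
  simp [Fin.sum_univ_succ, hη]

theorem exists_coercive_mul_sq_zero_add {T : X → Matrix (Fin (n + 1)) (Fin (n + 1)) ℝ}
    (hTc : Continuous T)
    (hTspatial : ∀ p, ∀ ξ : Fin n → ℝ, ξ ≠ 0 → 0 < ∑ i, ∑ j, T p i.succ j.succ * ξ i * ξ j) :
    ∃ lam > 0, ∃ δ > 0, ∀ p, ∀ η : Fin (n + 1) → ℝ,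
      δ * ‖η‖ ^ 2 ≤ lam * η 0 ^ 2 + ∑ α, ∑ β, T p α β * η α * η β :=
  exists_coercive_mul_sq_add (fun p (η : Fin (n + 1) → ℝ) => ∑ α, ∑ β, T p α β * η α * η β)
    (ContinuousLinearMap.proj 0) (continuous_sum_sum_mul hTc)
    (fun p => isSqHomogeneous_sum_sum_mul (T p)) fun p η hη h0 => by
      rw [sum_sum_mul_eq_of_apply_zero _ h0]
      exact hTspatial p _ fun hξ => hη (funext fun α => Fin.cases h0 (congrFun hξ) α)

theorem exists_lorentzian_le_mul_norm_sq {σ : X → Matrix (Fin n) (Fin n) ℝ}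
    (hσc : Continuous σ) : ∃ C, ∀ p, ∀ η : Fin (n + 1) → ℝ,
      -(η 0) ^ 2 + ∑ i, ∑ j, σ p i j * η i.succ * η j.succ ≤ C * ‖η‖ ^ 2 := by
  refine exists_le_mul_norm_sq (F := fun p (η : Fin (n + 1) → ℝ) =>
    -(η 0) ^ 2 + ∑ i, ∑ j, σ p i j * η i.succ * η j.succ) ?_ fun p c η => ?_
  · have := fun i j => hσc.matrix_elem i j
    fun_prop
  · have hσ := isSqHomogeneous_sum_sum_mul (σ p) c fun i => η i.succ
    simp only [Pi.smul_apply, smul_eq_mul] at hσ ⊢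
    rw [hσ]
    ring

end Lorentzian

theorem stmt16_general (n : ℕ) (X : Type*) [TopologicalSpace X] [CompactSpace X]
    (ψ t : X → ℝ) (hψ : Continuous ψ) (ht : Continuous t)
    (σ : X → Matrix (Fin n) (Fin n) ℝ) (hσc : Continuous σ)
    (T : X → Matrix (Fin (n + 1)) (Fin (n + 1)) ℝ) (hTc : Continuous T)
    (hTspatial : ∀ p, ∀ ξ : Fin n → ℝ, ξ ≠ 0 →
      0 < ∑ i, ∑ j, T p i.succ j.succ * ξ i * ξ j) :
    ∃ lam : ℝ, 0 < lam ∧ ∃ c : ℝ, 0 < c ∧ ∀ p, ∀ η : Fin (n + 1) → ℝ,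
      c * (Real.exp (2 * ψ p) *
          (-(η 0) ^ 2 + ∑ i, ∑ j, σ p i j * η i.succ * η j.succ)) ≤
        Real.exp (lam * t p) *
          (lam ^ 2 * (η 0) ^ 2 + lam * ∑ α, ∑ β, T p α β * η α * η β) := by
  obtain ⟨lam, hlam, δ, hδ, hcoer⟩ := exists_coercive_mul_sq_zero_add hTc hTspatial
  obtain ⟨C, hC⟩ := exists_lorentzian_le_mul_norm_sq hσc
  obtain ⟨m, hm, hmle⟩ := isCompact_univ.exists_forall_le'
    (f := fun p => Real.exp (lam * t p - 2 * ψ p)) (by fun_prop) (a := 0)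
    fun p _ => Real.exp_pos _
  refine ⟨lam, hlam, m * lam * δ / (|C| + 1), by positivity, fun p η => ?_⟩
  have hexp : m * Real.exp (2 * ψ p) ≤ Real.exp (lam * t p) := calc
    _ ≤ Real.exp (lam * t p - 2 * ψ p) * Real.exp (2 * ψ p) := by
        gcongr
        exact hmle p (mem_univ p)
    _ = Real.exp (lam * t p) := by rw [← Real.exp_add, sub_add_cancel]
  calc _ ≤ m * lam * δ / (|C| + 1) * (Real.exp (2 * ψ p) * ((|C| + 1) * ‖η‖ ^ 2)) := by
        gcongr
        exact (hC p η).trans (by gcongr; linarith [le_abs_self C])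
    _ = m * Real.exp (2 * ψ p) * lam * (δ * ‖η‖ ^ 2) := by field_simp
    _ ≤ Real.exp (lam * t p) * lam * (lam * η 0 ^ 2 + ∑ α, ∑ β, T p α β * η α * η β) := by
        gcongr
        exact hcoer p η
    _ = _ := by ring

/-- in coordinates, on the compact set Ω̄ =: X: if the covariant
Hessian T = (t_{αβ}) of the time function t is positive definite on spatial
directions (strict convexity of the coordinate slices), then for λ large the
function χ = e^{λt}, whose covariant Hessian is e^{λt}(λ² t_α t_β + λ t_{αβ}) with
t_α = (1,0,…,0), is strictly convex: χ_{αβ} ≥ c ḡ_{αβ} with c > 0, where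
ḡ = e^{2ψ}(−(dx⁰)² + σ_{ij}dx^i dx^j). -/
theorem stmt16 (n : ℕ) (X : Type*) [TopologicalSpace X] [CompactSpace X]
    (ψ t : X → ℝ) (hψ : Continuous ψ) (ht : Continuous t)
    (σ : X → Matrix (Fin n) (Fin n) ℝ) (hσc : Continuous σ)
    (hσ : ∀ p, (σ p).PosDef)
    (T : X → Matrix (Fin (n + 1)) (Fin (n + 1)) ℝ) (hTc : Continuous T)
    (hTsym : ∀ p, (T p).IsSymm)
    (hTspatial : ∀ p, ∀ ξ : Fin n → ℝ, ξ ≠ 0 →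
      0 < ∑ i, ∑ j, T p i.succ j.succ * ξ i * ξ j) :
    ∃ lam : ℝ, 0 < lam ∧ ∃ c : ℝ, 0 < c ∧ ∀ p, ∀ η : Fin (n + 1) → ℝ,
      c * (Real.exp (2 * ψ p) *
          (-(η 0) ^ 2 + ∑ i, ∑ j, σ p i j * η i.succ * η j.succ)) ≤
        Real.exp (lam * t p) *
          (lam ^ 2 * (η 0) ^ 2 + lam * ∑ α, ∑ β, T p α β * η α * η β) :=
  stmt16_general n X ψ t hψ ht σ hσc T hTc hTspatial
end

section
/- Let M = graph u over a compact Riemannian manifold S₀ be a compact space-like hypersurface in a Gaussian coordinate system with Lorentzian metric ds² = e^{2ψ}(−(dx⁰)² + σ_{ij}(x⁰,x)dx^i dx^j), and suppose its principal curvatures (with respect to the past directed normal) satisfy κ_i ≥ κ₀ for all i. Then the gradient function ṽ = (1 − |Du|²)^{−1/2} admits an a priori bound ṽ ≤ c depending only on sup|u|, S₀, σ_{ij}, ψ, and κ₀ (and not on M itself). -/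
/-!
Let `λ = min κ₀ 0 - 1` and maximise `w = λ u + log ṽ = λ u - ½ log (1 - |Du|²)`, which is
ℤⁿ-periodic and hence attains its maximum at some `x₀`. Differentiating `w` at `x₀` in the
direction `Du` gives `D²u(Du, Du) = -λ |Du|² (1 - |Du|²)`. Plugging this into the curvature
bound along `ξ = Du` and writing `v = √(1 - |Du|²) ∈ (0, 1]` yields `κ₀ v ≤ λ` unless
`Du(x₀) = 0`, which is impossible since `κ₀ v ≥ min κ₀ 0 > λ`. Hence `Du(x₀) = 0`,
`w ≤ λ u(x₀)` everywhere, and `log ṽ ≤ 2 (1 - min κ₀ 0) sup |u|`.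
-/

open Real Function

theorem Continuous.exists_forall_ge_of_intPeriodic {ι α : Type*} [LinearOrder α]
    [TopologicalSpace α] [ClosedIciTopology α] {f : (ι → ℝ) → α} (hf : Continuous f)
    (hper : ∀ k : ι → ℤ, Periodic f fun i => (k i : ℝ)) : ∃ x₀, ∀ y, f y ≤ f x₀ := by
  obtain ⟨x₀, -, hx₀⟩ := (isCompact_Icc (a := (0 : ι → ℝ)) (b := 1)).exists_isMaxOn
    (Set.nonempty_Icc.2 zero_le_one) hf.continuousOn
  refine ⟨x₀, fun y => ?_⟩
  rw [← hper (fun i => -⌊y i⌋) y]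
  refine hx₀ ⟨fun i => ?_, fun i => ?_⟩
  · simpa using Int.floor_le (y i)
  · simpa [← sub_eq_add_neg] using (Int.fract_lt_one (y i)).le

section FDeriv

variable {𝕜 E F G : Type*} [NontriviallyNormedField 𝕜]
  [NormedAddCommGroup E] [NormedSpace 𝕜 E] [NormedAddCommGroup F] [NormedSpace 𝕜 F]
  [NormedAddCommGroup G] [NormedSpace 𝕜 G]

theorem Function.Periodic.fderiv {u : E → F} {a : E} (h : Periodic u a) :
    Periodic (fderiv 𝕜 u) a := fun x => by
  rw [← fderiv_comp_add_right, h.funext]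

theorem fderiv_clm_apply_const_apply {c : E → F →L[𝕜] G} {x : E}
    (hc : DifferentiableAt 𝕜 c x) (v : F) (w : E) :
    fderiv 𝕜 (fun y => c y v) x w = fderiv 𝕜 c x w v := by
  simp [fderiv_clm_apply hc (differentiableAt_const v)]

end FDeriv

section Gradient

variable {ι : Type*} [Fintype ι] [DecidableEq ι]

theorem ContinuousLinearMap.apply_eq_sum_mul_single (T : (ι → ℝ) →L[ℝ] ℝ) (ξ : ι → ℝ) :
    T ξ = ∑ i, ξ i * T (Pi.single i 1) := by
  conv_lhs => rw [pi_eq_sum_univ' ξ, map_sum]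
  simp only [map_smul, smul_eq_mul]

noncomputable def coordGrad (u : (ι → ℝ) → ℝ) (x : ι → ℝ) : ι → ℝ :=
  fun i => fderiv ℝ u x (Pi.single i 1)

noncomputable def gradNormSq (u : (ι → ℝ) → ℝ) (x : ι → ℝ) : ℝ :=
  ∑ i, coordGrad u x i ^ 2

variable {u : (ι → ℝ) → ℝ} {x : ι → ℝ}

theorem fderiv_apply_coordGrad : fderiv ℝ u x (coordGrad u x) = gradNormSq u x := by
  rw [(fderiv ℝ u x).apply_eq_sum_mul_single]
  simp only [gradNormSq, coordGrad, sq]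

theorem Function.Periodic.gradNormSq {a : ι → ℝ} (h : Periodic u a) :
    Periodic (gradNormSq u) a :=
  h.fderiv.comp fun T => ∑ i, T (Pi.single i 1) ^ 2

theorem hasFDerivAt_gradNormSq (h : DifferentiableAt ℝ (fderiv ℝ u) x) :
    HasFDerivAt (gradNormSq u) (2 • (fderiv ℝ (fderiv ℝ u) x).flip (coordGrad u x)) x := by
  have hcoord (i : ι) : HasFDerivAt (fun y => coordGrad u y i)
      ((fderiv ℝ (fderiv ℝ u) x).flip (Pi.single i 1)) x := by
    simpa [coordGrad] using h.hasFDerivAt.clm_apply (hasFDerivAt_const (Pi.single i 1 : ι → ℝ) x)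
  refine (HasFDerivAt.fun_sum fun i _ => (hcoord i).pow 2).congr_fderiv ?_
  ext ξ
  have hexpand := ((fderiv ℝ (fderiv ℝ u) x) ξ).apply_eq_sum_mul_single (coordGrad u x)
  simp [hexpand, Finset.mul_sum, mul_assoc]

/-- The function `w = λ u + log ṽ` of the maximum principle argument, where
`ṽ = (1 - |Du|²)^(-1/2)`. -/
noncomputable def testFunction (lam : ℝ) (u : (ι → ℝ) → ℝ) (x : ι → ℝ) : ℝ :=
  lam * u x - 2⁻¹ * log (1 - gradNormSq u x)

theorem hasFDerivAt_testFunction (lam : ℝ) (hu : DifferentiableAt ℝ u x)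
    (hDu : DifferentiableAt ℝ (fderiv ℝ u) x) (hS : gradNormSq u x < 1) :
    HasFDerivAt (testFunction lam u) (lam • fderiv ℝ u x +
      (1 - gradNormSq u x)⁻¹ • (fderiv ℝ (fderiv ℝ u) x).flip (coordGrad u x)) x := by
  have hlog := ((hasFDerivAt_gradNormSq hDu).const_sub 1).log (sub_pos.2 hS).ne'
  refine ((hu.hasFDerivAt.const_mul lam).sub (hlog.const_mul 2⁻¹)).congr_fderiv ?_
  ext ξ
  simp only [smul_neg, sub_neg_eq_add, add_apply, smul_apply, smul_eq_mul,
    ContinuousLinearMap.flip_apply, nsmul_eq_mul, Nat.cast_ofNat, add_right_inj]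
  ring

theorem Function.Periodic.testFunction (lam : ℝ) {a : ι → ℝ} (h : Periodic u a) :
    Periodic (testFunction lam u) a := fun y => by
  simp only [_root_.testFunction, h y, h.gradNormSq y]

theorem hessian_coordGrad_of_isLocalMax {lam : ℝ} (hu : DifferentiableAt ℝ u x)
    (hDu : DifferentiableAt ℝ (fderiv ℝ u) x) (hS : gradNormSq u x < 1)
    (hmax : IsLocalMax (testFunction lam u) x) :
    fderiv ℝ (fderiv ℝ u) x (coordGrad u x) (coordGrad u x) =
      -lam * gradNormSq u x * (1 - gradNormSq u x) := by
  have hcrit := congrArg (· (coordGrad u x))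
    ((hasFDerivAt_testFunction lam hu hDu hS).fderiv ▸ hmax.fderiv_eq_zero)
  simp only [add_apply, smul_apply, fderiv_apply_coordGrad, smul_eq_mul,
    ContinuousLinearMap.flip_apply, zero_apply] at hcrit
  field_simp [(sub_pos.2 hS).ne'] at hcrit
  linear_combination hcrit

end Gradient

theorem eq_zero_of_curvature_le {κ₀ lam S Q : ℝ} (hlam : lam < min κ₀ 0) (hS₀ : 0 ≤ S)
    (hS₁ : S < 1) (hQ : Q = -lam * S * (1 - S))
    (hκ : κ₀ * (S - S ^ 2) ≤ -(√(1 - S))⁻¹ * Q) : S = 0 := by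
  by_contra hne
  have hS : 0 < S := hS₀.lt_of_ne' hne
  set v := √(1 - S)
  have hv : 0 < v := sqrt_pos.2 (sub_pos.2 hS₁)
  have hv₁ : v ≤ 1 := sqrt_le_one.2 (by linarith)
  have hv_sq : v ^ 2 = 1 - S := sq_sqrt (sub_nonneg.2 hS₁.le)
  have hκv : κ₀ * v ≤ lam := by
    have hQv : -v⁻¹ * Q = lam * S * v := by
      rw [hQ, ← hv_sq]
      field_simp
    have hκ' : κ₀ * v * (S * v) = κ₀ * (S - S ^ 2) := by linear_combination κ₀ * S * hv_sq
    refine le_of_mul_le_mul_right ?_ (mul_pos hS hv)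
    linarith
  have hmin : min κ₀ 0 ≤ κ₀ * v := by
    rcases le_total 0 κ₀ with h | h
    · exact (min_le_right _ _).trans (mul_nonneg h hv.le)
    · exact (min_le_left _ _).trans (by nlinarith)
  linarith

theorem inv_sqrt_le_exp_of_neg_log_le {a A : ℝ} (ha : 0 < a) (h : -(2⁻¹ * log a) ≤ A) :
    (√a)⁻¹ ≤ exp A := by
  rw [← exp_log ha, ← exp_half, ← exp_neg]
  exact exp_le_exp.2 (by linarith)

/-- flat model: S₀ the torus, σ_{ij} = δ_{ij}, ψ = 0: a compact
space-like graph in Minkowski space whose principal curvatures with respect to the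
past directed normal are bounded below by κ₀ — i.e. the second fundamental form
h_{ij}ξ^iξ^j = −v⁻¹ u_{,ij}ξ^iξ^j dominates κ₀ g_{ij}ξ^iξ^j with
g_{ij} = δ_{ij} − u_i u_j — satisfies an a priori gradient bound
ṽ = (1 − |Du|²)^{−1/2} ≤ c, where c depends only on n, κ₀ and sup|u| = m,
and not on the hypersurface itself. -/
theorem stmt17 (n : ℕ) (κ₀ m : ℝ) :
    ∃ c : ℝ, ∀ u : (Fin n → ℝ) → ℝ, ContDiff ℝ 2 u →
      (∀ (x : Fin n → ℝ) (k : Fin n → ℤ), u (x + fun i => (k i : ℝ)) = u x) →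
      (∀ x, ∑ i, (fderiv ℝ u x (Pi.single i 1)) ^ 2 < 1) →
      (∀ x, |u x| ≤ m) →
      (∀ x, ∀ ξ : Fin n → ℝ,
        κ₀ * ((∑ i, (ξ i) ^ 2) - (fderiv ℝ u x ξ) ^ 2) ≤
          -(Real.sqrt (1 - ∑ i, (fderiv ℝ u x (Pi.single i 1)) ^ 2))⁻¹ *
            fderiv ℝ (fun y => fderiv ℝ u y ξ) x ξ) →
      ∀ x, (Real.sqrt (1 - ∑ i, (fderiv ℝ u x (Pi.single i 1)) ^ 2))⁻¹ ≤ c := by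
  refine ⟨exp (2 * (1 - min κ₀ 0) * m), fun u hu hper hsp hm hcurv x => ?_⟩
  have hu₁ : Differentiable ℝ u := hu.differentiable two_ne_zero
  have hDu : Differentiable ℝ (fderiv ℝ u) :=
    (hu.fderiv_right (m := 1) le_rfl).differentiable one_ne_zero
  have hw (y) := hasFDerivAt_testFunction (min κ₀ 0 - 1) (hu₁ y) (hDu y) (hsp y)
  obtain ⟨x₀, hx₀⟩ := Continuous.exists_forall_ge_of_intPeriodic
    (continuous_iff_continuousAt.2 fun y => (hw y).continuousAt)
    fun k => Periodic.testFunction (min κ₀ 0 - 1) fun y => hper y k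
  have hS₀ : gradNormSq u x₀ = 0 := by
    refine eq_zero_of_curvature_le (sub_one_lt _) (by unfold gradNormSq; positivity) (hsp x₀)
      (hessian_coordGrad_of_isLocalMax (hu₁ x₀) (hDu x₀) (hsp x₀) (.of_forall hx₀)) ?_
    have hκ := hcurv x₀ (coordGrad u x₀)
    rwa [fderiv_clm_apply_const_apply (hDu x₀), fderiv_apply_coordGrad] at hκ
  have hmax := hx₀ x
  simp only [testFunction, hS₀, sub_zero, log_one, mul_zero] at hmax
  refine inv_sqrt_le_exp_of_neg_log_le (sub_pos.2 (hsp x)) ?_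
  have hux := abs_le.1 (hm x)
  have hux₀ := abs_le.1 (hm x₀)
  change -(2⁻¹ * log (1 - gradNormSq u x)) ≤ _
  linarith [mul_nonneg (sub_nonneg.2 ((min_le_right κ₀ 0).trans zero_le_one))
    (show 0 ≤ 2 * m - u x + u x₀ by linarith)]
end
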